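/- Let β > 0 and 0 < t₁ < t₂ with t₂ − t₁ > √(40/β). Then the quadratic form Q(h) = ∫_{t₁}^{t₂} t³( ḣ(t)² − β h(t)² ) dt on the space of continuously differentiable functions h : [t₁,t₂] → ℝ with h(t₁) = h(t₂) = 0 is indefinite: there exist admissible h₊ and h₋ with Q(h₊) > 0 and Q(h₋) < 0. -/

import Mathlib

/-!
Since `t₁³ ≤ t³ ≤ t₂³` on the interval, `Q(h) ≥ t₁³ ∫ ḣ² - β t₂³ ∫ h²`; for the fast
oscillation `h = sin (ω (t - t₁))` with `ω (t₂ - t₁) ∈ πℕ` these integrals are `ω² (t₂ - t₁)/2`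
and `(t₂ - t₁)/2`, so `Q(h) > 0` once `ω² > β t₂³ / t₁³`. For the bump `h = (t - t₁)(t₂ - t)`
the integral is a polynomial computed exactly; writing `t = t₁ + s`, each moment `∫ s^k ḣ²`
(`k ≤ 3`) is at most `20 / (t₂ - t₁)²` times the moment `∫ s^k h²`, so `Q(h) < 0` once
`β (t₂ - t₁)² > 40`.
-/

open Set Real intervalIntegral Filter

noncomputable def secondVariation (β a b : ℝ) (h h' : ℝ → ℝ) : ℝ :=
  ∫ t in a..b, t ^ 3 * (h' t ^ 2 - β * h t ^ 2)

def IsAdmissiblePerturbation (a b : ℝ) (h h' : ℝ → ℝ) : Prop :=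
  (∀ t ∈ Icc a b, HasDerivWithinAt h (h' t) (Icc a b) t) ∧
    ContinuousOn h' (Icc a b) ∧ h a = 0 ∧ h b = 0

lemma IsAdmissiblePerturbation.of_hasDerivAt {a b : ℝ} {h h' : ℝ → ℝ}
    (hd : ∀ t, HasDerivAt h (h' t) t) (hc : Continuous h') (ha : h a = 0) (hb : h b = 0) :
    IsAdmissiblePerturbation a b h h' :=
  ⟨fun t _ => (hd t).hasDerivWithinAt, hc.continuousOn, ha, hb⟩

lemma mul_integral_sub_le_secondVariation {β a b : ℝ} (hβ : 0 ≤ β) (ha : 0 ≤ a) (hab : a ≤ b)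
    {h h' : ℝ → ℝ} (hc : Continuous h) (hc' : Continuous h') :
    a ^ 3 * (∫ t in a..b, h' t ^ 2) - β * b ^ 3 * ∫ t in a..b, h t ^ 2 ≤
      secondVariation β a b h h' := by
  rw [← integral_const_mul, ← integral_const_mul,
    ← integral_sub ((by fun_prop : Continuous _).intervalIntegrable _ _)
      ((by fun_prop : Continuous _).intervalIntegrable _ _)]
  refine integral_mono_on hab ((by fun_prop : Continuous _).intervalIntegrable _ _)
    ((by fun_prop : Continuous _).intervalIntegrable _ _) fun t ⟨hat, htb⟩ => ?_
  have hcube_lo : a ^ 3 ≤ t ^ 3 := pow_le_pow_left₀ ha hat 3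
  have hcube_hi : t ^ 3 ≤ b ^ 3 := pow_le_pow_left₀ (ha.trans hat) htb 3
  nlinarith [mul_le_mul_of_nonneg_right hcube_lo (sq_nonneg (h' t)),
    mul_le_mul_of_nonneg_right hcube_hi (mul_nonneg hβ (sq_nonneg (h t)))]

lemma integral_sin_sq_mul_sub {ω a b : ℝ} (hω : ω ≠ 0) (hsin : sin (ω * (b - a)) = 0) :
    ∫ t in a..b, sin (ω * (t - a)) ^ 2 = (b - a) / 2 := by
  rw [integral_comp_sub_right (fun s => sin (ω * s) ^ 2),
    integral_comp_mul_left (fun s => sin s ^ 2) hω, integral_sin_sq, hsin]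
  simp [field]

lemma integral_cos_sq_mul_sub {ω a b : ℝ} (hω : ω ≠ 0) (hsin : sin (ω * (b - a)) = 0) :
    ∫ t in a..b, cos (ω * (t - a)) ^ 2 = (b - a) / 2 := by
  rw [integral_comp_sub_right (fun s => cos (ω * s) ^ 2),
    integral_comp_mul_left (fun s => cos s ^ 2) hω, integral_cos_sq, hsin]
  simp [field]

lemma exists_sin_eq_zero_lt_sq {a b : ℝ} (hab : a < b) (C : ℝ) :
    ∃ ω : ℝ, ω ≠ 0 ∧ sin (ω * (b - a)) = 0 ∧ C < ω ^ 2 := by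
  have hsq : Tendsto (fun N : ℕ => (N * (π / (b - a))) ^ 2) atTop atTop :=
    (tendsto_pow_atTop two_ne_zero).comp
      (tendsto_natCast_atTop_atTop.atTop_mul_const (div_pos pi_pos (sub_pos.2 hab)))
  obtain ⟨N, hCN, hN⟩ := ((hsq.eventually_gt_atTop C).and (eventually_ne_atTop 0)).exists
  refine ⟨N * (π / (b - a)), by positivity, ?_, hCN⟩
  rw [mul_assoc, div_mul_cancel₀ _ (sub_pos.2 hab).ne', sin_nat_mul_pi]

lemma isAdmissiblePerturbation_sin {ω a b : ℝ} (hsin : sin (ω * (b - a)) = 0) :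
    IsAdmissiblePerturbation a b (fun t => sin (ω * (t - a))) (fun t => ω * cos (ω * (t - a))) :=
  .of_hasDerivAt
    (fun t => by simpa [mul_comm] using (((hasDerivAt_id t).sub_const a).const_mul ω).sin)
    (by fun_prop) (by simp) hsin

lemma secondVariation_sin_pos {β ω a b : ℝ} (hβ : 0 ≤ β) (ha : 0 < a) (hab : a < b)
    (hω : ω ≠ 0) (hsin : sin (ω * (b - a)) = 0) (hfreq : β * b ^ 3 < ω ^ 2 * a ^ 3) :
    0 < secondVariation β a b (fun t => sin (ω * (t - a))) (fun t => ω * cos (ω * (t - a))) := by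
  refine lt_of_lt_of_le ?_ (mul_integral_sub_le_secondVariation hβ ha.le hab.le
    (by fun_prop) (by fun_prop))
  simp only [mul_pow, integral_const_mul, integral_sin_sq_mul_sub hω hsin,
    integral_cos_sq_mul_sub hω hsin]
  nlinarith [sub_pos.2 hab]

lemma isAdmissiblePerturbation_bump (a b : ℝ) :
    IsAdmissiblePerturbation a b (fun t => (t - a) * (b - t)) (fun t => a + b - 2 * t) :=
  .of_hasDerivAt (fun t => by
    refine (((hasDerivAt_id t).sub_const a).mul ((hasDerivAt_id t).const_sub b)).congr_deriv ?_
    simp only [id_eq]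
    ring) (by fun_prop) (by simp) (by simp)

lemma secondVariation_bump_eq (β a b : ℝ) :
    secondVariation β a b (fun t => (t - a) * (b - t)) (fun t => a + b - 2 * t) =
      (a ^ 3 * (b - a) ^ 3 / 3 + a ^ 2 * (b - a) ^ 4 / 2 + 2 * a * (b - a) ^ 5 / 5
        + 7 * (b - a) ^ 6 / 60) -
      β * (a ^ 3 * (b - a) ^ 5 / 30 + a ^ 2 * (b - a) ^ 6 / 20 + a * (b - a) ^ 7 / 35
        + (b - a) ^ 8 / 168) := by
  let F : ℝ → ℝ := fun t =>
    ((a + b) ^ 2 - β * a ^ 2 * b ^ 2) / 4 * t ^ 4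
      + (-4 * (a + b) + 2 * β * a * b * (a + b)) / 5 * t ^ 5
      + (4 - β * ((a + b) ^ 2 + 2 * a * b)) / 6 * t ^ 6
      + 2 * β * (a + b) / 7 * t ^ 7 - β / 8 * t ^ 8
  have hF : ∀ t,
      HasDerivAt F (t ^ 3 * ((a + b - 2 * t) ^ 2 - β * ((t - a) * (b - t)) ^ 2)) t := by
    intro t
    refine (((((hasDerivAt_pow 4 t).const_mul _).add ((hasDerivAt_pow 5 t).const_mul _)).add
      ((hasDerivAt_pow 6 t).const_mul _)).add ((hasDerivAt_pow 7 t).const_mul _)).sub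
      ((hasDerivAt_pow 8 t).const_mul _) |>.congr_deriv ?_
    push_cast
    ring
  rw [secondVariation, integral_eq_sub_of_hasDerivAt (fun t _ => hF t)
    ((by fun_prop : Continuous _).intervalIntegrable _ _)]
  ring

lemma secondVariation_bump_neg {β a b : ℝ} (ha : 0 ≤ a) (hab : a < b)
    (hgap : 40 < β * (b - a) ^ 2) :
    secondVariation β a b (fun t => (t - a) * (b - t)) (fun t => a + b - 2 * t) < 0 := by
  rw [secondVariation_bump_eq]
  set L := b - a
  have hL : 0 < L := sub_pos.2 hab
  have hkinetic : L ^ 2 * (a ^ 3 * L ^ 3 / 3 + a ^ 2 * L ^ 4 / 2 + 2 * a * L ^ 5 / 5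
      + 7 * L ^ 6 / 60) ≤
      40 * (a ^ 3 * L ^ 5 / 30 + a ^ 2 * L ^ 6 / 20 + a * L ^ 7 / 35 + L ^ 8 / 168) := by
    linarith [show 0 ≤ a ^ 3 * L ^ 5 by positivity, show 0 ≤ a ^ 2 * L ^ 6 by positivity,
      show 0 ≤ a * L ^ 7 by positivity, show 0 ≤ L ^ 8 by positivity]
  have hpotential :
      0 < a ^ 3 * L ^ 5 / 30 + a ^ 2 * L ^ 6 / 20 + a * L ^ 7 / 35 + L ^ 8 / 168 := by
    positivity
  refine neg_of_mul_neg_right (a := L ^ 2) ?_ (sq_nonneg L)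
  nlinarith

/-- **Indefiniteness of the second variation** of the action of Nesterov's Lagrangian with
vanishing damping `3/t` on `f(x) = βx²/2`: if `t₂ - t₁ > √(40/β)`, the quadratic form
`Q(h) = ∫_{t₁}^{t₂} t³(ḣ² - βh²) dt` on admissible perturbations is indefinite. -/
theorem nesterov_vanishing_damping_second_variation_indefinite
    (β t₁ t₂ : ℝ) (hβ : 0 < β) (ht₁ : 0 < t₁) (ht : t₁ < t₂)
    (hgap : t₂ - t₁ > Real.sqrt (40 / β)) :
    ∃ hp hp' hm hm' : ℝ → ℝ,
      (∀ t ∈ Icc t₁ t₂, HasDerivWithinAt hp (hp' t) (Icc t₁ t₂) t) ∧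
      ContinuousOn hp' (Icc t₁ t₂) ∧ hp t₁ = 0 ∧ hp t₂ = 0 ∧
      (∀ t ∈ Icc t₁ t₂, HasDerivWithinAt hm (hm' t) (Icc t₁ t₂) t) ∧
      ContinuousOn hm' (Icc t₁ t₂) ∧ hm t₁ = 0 ∧ hm t₂ = 0 ∧
      (0 < ∫ t in t₁..t₂, t ^ 3 * ((hp' t) ^ 2 - β * (hp t) ^ 2)) ∧
      (∫ t in t₁..t₂, t ^ 3 * ((hm' t) ^ 2 - β * (hm t) ^ 2)) < 0 := by
  have hgap' : 40 < β * (t₂ - t₁) ^ 2 := by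
    have h := (sqrt_lt' (sub_pos.2 ht)).1 hgap
    rwa [div_lt_iff₀ hβ, mul_comm] at h
  obtain ⟨ω, hω, hsin, hfreq⟩ := exists_sin_eq_zero_lt_sq ht (β * t₂ ^ 3 / t₁ ^ 3)
  rw [div_lt_iff₀ (by positivity)] at hfreq
  obtain ⟨hp_deriv, hp_cont, hp_left, hp_right⟩ := isAdmissiblePerturbation_sin hsin
  obtain ⟨hm_deriv, hm_cont, hm_left, hm_right⟩ := isAdmissiblePerturbation_bump t₁ t₂
  exact ⟨_, _, _, _, hp_deriv, hp_cont, hp_left, hp_right, hm_deriv, hm_cont, hm_left, hm_right,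
    secondVariation_sin_pos hβ.le ht₁ ht hω hsin hfreq, secondVariation_bump_neg ht₁.le ht hgap'⟩
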